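/- arXiv:2507.05644 — 6 statements merged into one kernel-verified Lean document; each statement's English description precedes it below -/
import Mathlib

section
/- Let n, d, d' be positive integers and λ > 0. For each i = 1,…,n let h_i ∈ ℝ^d and let ℓ_i : ℝ^{d'} → ℝ be differentiable. Define the regularized loss L_λ : ℝ^{d'×d} → ℝ by L_λ(W) = (1/n)·Σ_{i=1}^n ℓ_i(W h_i) + (λ/2)·‖W‖_F². If W ∈ ℝ^{d'×d} is a critical point of L_λ (the total derivative of L_λ at W vanishes), then W^⊤ W = −(1/(nλ))·Σ_{i=1}^n (W^⊤ ∇ℓ_i(W h_i)) h_i^⊤, where ∇ℓ_i(W h_i) ∈ ℝ^{d'} is the gradient of ℓ_i at W h_i and (W^⊤ ∇ℓ_i(W h_i)) h_i^⊤ denotes the d×d outer-product matrix. -/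
/-!
At a critical point, testing the vanishing derivative of `L_λ` against the matrix units shows
that its Frobenius gradient `(1/n) ∑ᵢ ∇ℓᵢ(W hᵢ) hᵢᵀ + λ W` is zero. Hence
`W = -(1/(nλ)) ∑ᵢ ∇ℓᵢ(W hᵢ) hᵢᵀ`, and multiplying on the left by `Wᵀ` turns each
`Wᵀ (∇ℓᵢ hᵢᵀ)` into `(Wᵀ ∇ℓᵢ) hᵢᵀ`.
-/

open Matrix

attribute [local instance] Matrix.frobeniusSeminormedAddCommGroup
  Matrix.frobeniusNormedAddCommGroup Matrix.frobeniusNormedSpace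

/-- The gradient of a function `f : ℝ^k → ℝ`, as a plain vector `Fin k → ℝ`. -/
noncomputable def grad {k : ℕ} (f : EuclideanSpace ℝ (Fin k) → ℝ) (x : Fin k → ℝ) :
    Fin k → ℝ :=
  WithLp.equiv 2 (Fin k → ℝ) <| gradient f ((WithLp.equiv 2 (Fin k → ℝ)).symm x)

namespace Matrix

variable {ι κ : Type*} [Fintype ι] [Fintype κ]

/- The calculus API equips `Matrix` with the Frobenius-norm instances, while
`frobeniusPairing G` carries the default ones. They agree only up to unfolding, so `simp` cannot
mix the two: identities between derivatives are proved on the `frobeniusPairing` side and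
transported with `congr_fderiv`. -/
noncomputable def frobeniusPairing : Matrix ι κ ℝ →ₗ[ℝ] Matrix ι κ ℝ →L[ℝ] ℝ :=
  LinearMap.toContinuousLinearMap.toLinearMap ∘ₗ
    LinearMap.mk₂ ℝ (fun G U => ∑ a, ∑ b, G a b * U a b)
      (fun _ _ _ => by simp [add_mul, Finset.sum_add_distrib])
      (fun _ _ _ => by simp [mul_assoc, Finset.mul_sum])
      (fun _ _ _ => by simp [mul_add, Finset.sum_add_distrib])
      (fun _ _ _ => by simp [mul_left_comm _ _ (_ : ℝ), Finset.mul_sum])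

theorem frobeniusPairing_apply (G U : Matrix ι κ ℝ) :
    frobeniusPairing G U = ∑ a, ∑ b, G a b * U a b := rfl

theorem frobeniusPairing_comm (G U : Matrix ι κ ℝ) :
    frobeniusPairing G U = frobeniusPairing U G := by
  simp only [frobeniusPairing_apply, mul_comm]

theorem frobeniusPairing_single [DecidableEq ι] [DecidableEq κ] (a : ι) (b : κ)
    (U : Matrix ι κ ℝ) : frobeniusPairing (single a b 1) U = U a b := by
  simp [frobeniusPairing_apply, single_apply, ite_and]

theorem frobeniusPairing_injective :
    Function.Injective (frobeniusPairing : Matrix ι κ ℝ →ₗ[ℝ] Matrix ι κ ℝ →L[ℝ] ℝ) := by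
  classical
  intro G H hGH
  ext a b
  rw [← frobeniusPairing_single a b G, frobeniusPairing_comm, hGH, ← frobeniusPairing_comm,
    frobeniusPairing_single]

noncomputable def mulVecCLM (x : κ → ℝ) : Matrix ι κ ℝ →L[ℝ] EuclideanSpace ℝ ι :=
  LinearMap.toContinuousLinearMap
    ((WithLp.linearEquiv 2 ℝ (ι → ℝ)).symm.toLinearMap ∘ₗ (mulVecBilin ℝ ℝ).flip x)

theorem hasFDerivAt_sum_sq_entries (W : Matrix ι κ ℝ) :
    HasFDerivAt (fun V : Matrix ι κ ℝ => ∑ a, ∑ b, V a b ^ 2)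
      (frobeniusPairing ((2 : ℝ) • W)) W := by
  classical
  have hentry (a : ι) (b : κ) :
      HasFDerivAt (fun V : Matrix ι κ ℝ => V a b) (frobeniusPairing (single a b 1)) W := by
    have hfun : (fun V : Matrix ι κ ℝ => V a b) = frobeniusPairing (single a b 1) := by
      ext V
      rw [frobeniusPairing_single]
    exact hfun ▸ (frobeniusPairing (single a b 1)).hasFDerivAt
  have hexpand : frobeniusPairing ((2 : ℝ) • W) =
      ∑ a, ∑ b, (2 • W a b ^ (2 - 1)) • frobeniusPairing (single a b 1) := by
    ext U
    simp only [_root_.smul_apply, nsmul_eq_mul, Nat.cast_ofNat, Nat.add_one_sub_one,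
      pow_one, _root_.sum_apply, frobeniusPairing_single, smul_eq_mul]
    simp only [frobeniusPairing_apply, smul_apply, smul_eq_mul, mul_assoc]
  exact (HasFDerivAt.fun_sum fun a _ => HasFDerivAt.fun_sum fun b _ =>
    (hentry a b).pow 2).congr_fderiv hexpand.symm

end Matrix

theorem HasGradientAt.hasFDerivAt_comp_mulVec {ι κ : Type*} [Fintype ι] [Fintype κ]
    {f : EuclideanSpace ℝ ι → ℝ} {g : EuclideanSpace ℝ ι} {W : Matrix ι κ ℝ} {x : κ → ℝ}
    (hf : HasGradientAt f g (WithLp.toLp 2 (W *ᵥ x))) :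
    HasFDerivAt (fun V : Matrix ι κ ℝ => f (WithLp.toLp 2 (V *ᵥ x)))
      (frobeniusPairing (vecMulVec g.ofLp x)) W := by
  refine (hf.hasFDerivAt.comp W (mulVecCLM x).hasFDerivAt).congr_fderiv ?_
  ext U
  change inner ℝ g (WithLp.toLp 2 (U *ᵥ x)) = ∑ a, ∑ b, vecMulVec g.ofLp x a b * U a b
  simp only [PiLp.inner_apply, RCLike.inner_apply, conj_trivial, mulVec, dotProduct,
    vecMulVec_apply, Finset.sum_mul]
  exact Finset.sum_congr rfl fun a _ => Finset.sum_congr rfl fun b _ => by ring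

theorem hasFDerivAt_regularized_loss {σ ι κ : Type*} [Fintype σ] [Fintype ι] [Fintype κ]
    {ℓ : σ → EuclideanSpace ℝ ι → ℝ} {h : σ → κ → ℝ} {W : Matrix ι κ ℝ} (c lam : ℝ)
    (hℓ : ∀ i, DifferentiableAt ℝ (ℓ i) (WithLp.toLp 2 (W *ᵥ h i))) :
    HasFDerivAt
      (fun V : Matrix ι κ ℝ =>
        c * ∑ i, ℓ i (WithLp.toLp 2 (V *ᵥ h i)) + (lam / 2) * ∑ a, ∑ b, V a b ^ 2)
      (frobeniusPairing
        (c • ∑ i, vecMulVec (gradient (ℓ i) (WithLp.toLp 2 (W *ᵥ h i))).ofLp (h i) + lam • W))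
      W := by
  have hcomb : frobeniusPairing
      (c • ∑ i, vecMulVec (gradient (ℓ i) (WithLp.toLp 2 (W *ᵥ h i))).ofLp (h i) + lam • W) =
      c • ∑ i, frobeniusPairing
          (vecMulVec (gradient (ℓ i) (WithLp.toLp 2 (W *ᵥ h i))).ofLp (h i)) +
        (lam / 2) • frobeniusPairing ((2 : ℝ) • W) := by
    simp only [map_add, map_smul, map_sum, smul_smul]
    norm_num
  exact (((HasFDerivAt.fun_sum fun i _ =>
    (hℓ i).hasGradientAt.hasFDerivAt_comp_mulVec).const_mul c).add
    ((hasFDerivAt_sum_sq_entries W).const_mul (lam / 2))).congr_fderiv hcomb.symm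

theorem features_at_convergence_general
    (n d d' : ℕ)
    (lam : ℝ) (hlam : 0 < lam)
    (h : Fin n → Fin d → ℝ)
    (ℓ : Fin n → EuclideanSpace ℝ (Fin d') → ℝ)
    (hdiff : ∀ i, Differentiable ℝ (ℓ i))
    (W : Matrix (Fin d') (Fin d) ℝ)
    (hcrit : fderiv ℝ
      (fun V : Matrix (Fin d') (Fin d) ℝ =>
        (1 / n : ℝ) * ∑ i, ℓ i ((WithLp.equiv 2 (Fin d' → ℝ)).symm (V.mulVec (h i)))
          + (lam / 2) * ∑ a : Fin d', ∑ b : Fin d, V a b ^ 2) W = 0) :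
    Wᵀ * W = (-(1 / (n * lam))) •
      ∑ i, Matrix.vecMulVec (Wᵀ.mulVec (grad (ℓ i) (W.mulVec (h i)))) (h i) := by
  set S := ∑ i, vecMulVec (grad (ℓ i) (W *ᵥ h i)) (h i)
  have hS : (1 / n : ℝ) • S + lam • W = 0 := by
    refine frobeniusPairing_injective (.trans ?_ (map_zero _).symm)
    exact (hasFDerivAt_regularized_loss (1 / n) lam fun i => hdiff i _).fderiv.symm.trans hcrit
  have hW : W = (-(1 / (n * lam))) • S := by
    rw [← inv_smul_smul₀ hlam.ne' W, eq_neg_of_add_eq_zero_right hS, smul_neg, smul_smul,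
      ← neg_smul]
    congr 2
    ring
  calc Wᵀ * W = Wᵀ * ((-(1 / (n * lam))) • S) := congrArg _ hW
    _ = _ := by simp only [S, Matrix.mul_smul, Matrix.mul_sum, mul_vecMulVec]

/-- **Features at Convergence Theorem (FACT).** If `W` is a critical point of the
regularized loss `L_λ(W) = (1/n) ∑ i, ℓ i (W h_i) + (λ/2) ‖W‖_F²`, then
`Wᵀ W = -(1/(nλ)) ∑ i (Wᵀ ∇ℓ_i(W h_i)) h_iᵀ`. -/
theorem features_at_convergence
    (n d d' : ℕ) (hn : 0 < n) (hd : 0 < d) (hd' : 0 < d')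
    (lam : ℝ) (hlam : 0 < lam)
    (h : Fin n → Fin d → ℝ)
    (ℓ : Fin n → EuclideanSpace ℝ (Fin d') → ℝ)
    (hdiff : ∀ i, Differentiable ℝ (ℓ i))
    (W : Matrix (Fin d') (Fin d) ℝ)
    (hcrit : fderiv ℝ
      (fun V : Matrix (Fin d') (Fin d) ℝ =>
        (1 / n : ℝ) * ∑ i, ℓ i ((WithLp.equiv 2 (Fin d' → ℝ)).symm (V.mulVec (h i)))
          + (lam / 2) * ∑ a : Fin d', ∑ b : Fin d, V a b ^ 2) W = 0) :
    Wᵀ * W = (-(1 / (n * lam))) •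
      ∑ i, Matrix.vecMulVec (Wᵀ.mulVec (grad (ℓ i) (W.mulVec (h i)))) (h i) :=
  features_at_convergence_general n d d' lam hlam h ℓ hdiff W hcrit
end

section
/- Let τ be a real number with |τ| ≤ 1 and let m ≥ 6 be an integer. Then there exist a ∈ ℝ^m and W ∈ ℝ^{m×4} such that a^⊤ σ(W x) = τ·x₁x₂ + x₃x₄ for all x ∈ ℝ⁴, where σ(t) = t² is applied entrywise, and moreover ‖a‖² + ‖W‖_F² ≤ 13. -/
open Matrix

lemma sum_first_four {m : ℕ} (hm : 6 ≤ m) (f : Fin m → ℝ)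
    (hf : ∀ i : Fin m, 4 ≤ i.val → f i = 0) :
    ∑ i, f i = f ⟨0, by omega⟩ + f ⟨1, by omega⟩ + f ⟨2, by omega⟩ + f ⟨3, by omega⟩ := by
  classical
  have h0 : (0:ℕ) < m := by omega
  have h1 : (1:ℕ) < m := by omega
  have h2 : (2:ℕ) < m := by omega
  have h3 : (3:ℕ) < m := by omega
  have hsub : ({⟨0,h0⟩, ⟨1,h1⟩, ⟨2,h2⟩, ⟨3,h3⟩} : Finset (Fin m)) ⊆ Finset.univ :=
    Finset.subset_univ _
  rw [← Finset.sum_subset hsub (by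
    intro x _ hx
    apply hf
    by_contra h
    push_neg at h
    apply hx
    simp only [Finset.mem_insert, Finset.mem_singleton]
    interval_cases h' : x.val <;> simp_all [Fin.ext_iff])]
  rw [Finset.sum_insert (by simp [Fin.ext_iff]), Finset.sum_insert (by simp [Fin.ext_iff]),
      Finset.sum_insert (by simp [Fin.ext_iff]), Finset.sum_singleton]
  ring

/-- **Low-norm representation of `f_*(x) = τ x₁x₂ + x₃x₄` by a two-layer quadratic network.**
For `|τ| ≤ 1` and width `m ≥ 6` there are weights `a, W` with
`aᵀ σ(W x) = τ x₁x₂ + x₃x₄` for all `x ∈ ℝ⁴` and `‖a‖² + ‖W‖_F² ≤ 13`. -/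
theorem low_norm_two_layer_representation
    (τ : ℝ) (hτ : |τ| ≤ 1) (m : ℕ) (hm : 6 ≤ m) :
    ∃ (a : Fin m → ℝ) (W : Matrix (Fin m) (Fin 4) ℝ),
      (∀ x : Fin 4 → ℝ, ∑ i, a i * (W.mulVec x i) ^ 2 = τ * (x 0 * x 1) + x 2 * x 3) ∧
      (∑ i, a i ^ 2) + (∑ i, ∑ j, W i j ^ 2) ≤ 13 := by
  classical
  set a : Fin m → ℝ := fun i =>
    if i.val = 0 then τ/4 else if i.val = 1 then -(τ/4)
    else if i.val = 2 then 1/4 else if i.val = 3 then -(1/4) else 0 with ha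
  set W : Matrix (Fin m) (Fin 4) ℝ := fun i j =>
    if i.val = 0 then (if j.val ≤ 1 then 1 else 0)
    else if i.val = 1 then (if j.val = 0 then 1 else if j.val = 1 then -1 else 0)
    else if i.val = 2 then (if j.val ≥ 2 then 1 else 0)
    else if i.val = 3 then (if j.val = 2 then 1 else if j.val = 3 then -1 else 0)
    else 0 with hW
  refine ⟨a, W, ?_, ?_⟩
  · intro x
    rw [sum_first_four hm _ (by
      intro i hi
      have h0 : i.val ≠ 0 := by omega
      have h1 : i.val ≠ 1 := by omega
      have h2 : i.val ≠ 2 := by omega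
      have h3 : i.val ≠ 3 := by omega
      simp [ha, h0, h1, h2, h3])]
    simp only [ha, hW, Matrix.mulVec, dotProduct, Fin.sum_univ_four]
    simp only [show ((0:Fin 4):ℕ) = 0 from rfl, show ((1:Fin 4):ℕ) = 1 from rfl, show ((2:Fin 4):ℕ) = 2 from rfl, show ((3:Fin 4):ℕ) = 3 from rfl]
    norm_num
    ring
  · rw [sum_first_four hm _ (by
      intro i hi
      have h0 : i.val ≠ 0 := by omega
      have h1 : i.val ≠ 1 := by omega
      have h2 : i.val ≠ 2 := by omega
      have h3 : i.val ≠ 3 := by omega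
      simp [ha, h0, h1, h2, h3]),
      sum_first_four hm _ (by
      intro i hi
      have h0 : i.val ≠ 0 := by omega
      have h1 : i.val ≠ 1 := by omega
      have h2 : i.val ≠ 2 := by omega
      have h3 : i.val ≠ 3 := by omega
      simp [hW, h0, h1, h2, h3])]
    simp only [ha, hW, Fin.sum_univ_four, show ((0:Fin 4):ℕ) = 0 from rfl, show ((1:Fin 4):ℕ) = 1 from rfl, show ((2:Fin 4):ℕ) = 2 from rfl, show ((3:Fin 4):ℕ) = 3 from rfl]
    norm_num
    obtain ⟨h1, h2⟩ := abs_le.mp hτ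
    nlinarith
end

section
/- Let f, g : ℝ⁴ → ℝ be homogeneous quadratic polynomials, f(x) = Σ_{1 ≤ i ≤ j ≤ 4} c_{ij} x_i x_j and g(x) = Σ_{1 ≤ i ≤ j ≤ 4} c'_{ij} x_i x_j. Then for every pair 1 ≤ i ≤ j ≤ 4, |c_{ij} − c'_{ij}| ≤ 6⁴ · ( E_{x ∼ Unif({0,1,2}⁴)}[ (f(x) − g(x))² ] )^{1/2}. -/
/-! The difference `f - g` is the upper-triangular quadratic form with coefficients
`d = c - c'`. At the 0/1 vectors of the grid it takes the value `d i i` at `e i` and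
`d i i + d i j + d j j` at `e i + e j` (`i < j`), so every `d i j` is a ±1-combination of at most
three grid values of `f - g`. A single grid value is at most the L² norm over the 81 grid points,
i.e. 9 times the root mean square, which gives the bound with `27` in place of `6 ^ 4`. -/

open Finset

section UpperQuadForm

variable {ι R : Type*} [LinearOrder ι] [LocallyFiniteOrderTop ι] [Fintype ι] [CommRing R]

def upperQuadForm (d : ι → ι → R) (x : ι → R) : R :=
  ∑ i, ∑ j ∈ Ici i, d i j * (x i * x j)

theorem upperQuadForm_sub (d d' : ι → ι → R) (x : ι → R) :
    upperQuadForm d x - upperQuadForm d' x = upperQuadForm (d - d') x := by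
  simp only [upperQuadForm, ← sum_sub_distrib, Pi.sub_apply, sub_mul]

theorem upperQuadForm_indicator (d : ι → ι → R) (s : Finset ι) :
    upperQuadForm d ((s : Set ι).indicator 1) = ∑ i ∈ s, ∑ j ∈ s with i ≤ j, d i j := by
  simp only [upperQuadForm, Set.indicator_apply, mem_coe, Pi.one_apply]
  rw [← sum_subset (subset_univ s) fun i _ hi => by simp [hi]]
  refine sum_congr rfl fun i hi => ?_
  have hfilter : {j ∈ Ici i | j ∈ s} = {j ∈ s | i ≤ j} := by ext; simp [and_comm]
  simp only [hi, if_true, mul_ite, mul_one, mul_zero, ← sum_filter, hfilter]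

theorem upperQuadForm_indicator_singleton (d : ι → ι → R) (i : ι) :
    upperQuadForm d (({i} : Set ι).indicator 1) = d i i := by
  simpa [filter_singleton] using upperQuadForm_indicator d {i}

theorem upperQuadForm_indicator_pair (d : ι → ι → R) {i j : ι} (hij : i < j) :
    upperQuadForm d (({i, j} : Set ι).indicator 1) = d i i + d i j + d j j := by
  classical
  simpa [filter_insert, filter_singleton, hij.le, hij.ne, not_le.mpr hij]
    using upperQuadForm_indicator d {i, j}

theorem eq_upperQuadForm_pair_sub_singletons (d : ι → ι → R) {i j : ι} (hij : i < j) :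
    d i j = upperQuadForm d (({i, j} : Set ι).indicator 1)
      - upperQuadForm d (({i} : Set ι).indicator 1)
      - upperQuadForm d (({j} : Set ι).indicator 1) := by
  rw [upperQuadForm_indicator_pair d hij, upperQuadForm_indicator_singleton,
    upperQuadForm_indicator_singleton]
  ring

end UpperQuadForm

theorem abs_le_sqrt_card_mul_sqrt_mean_sq {α : Type*} [Fintype α] (h : α → ℝ) (a : α) :
    |h a| ≤ √(Fintype.card α) * √((1 / Fintype.card α) * ∑ x, h x ^ 2) := by
  have hcard : (Fintype.card α : ℝ) ≠ 0 :=
    Nat.cast_ne_zero.mpr (Fintype.card_pos_iff.mpr ⟨a⟩).ne'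
  rw [← Real.sqrt_mul (Nat.cast_nonneg _), ← mul_assoc, mul_one_div_cancel hcard, one_mul,
    ← Real.sqrt_sq_eq_abs]
  exact Real.sqrt_le_sqrt (single_le_sum (fun x _ => sq_nonneg (h x)) (mem_univ a))

theorem natCast_val_indicator_one {ι R : Type*} [AddMonoidWithOne R] {n : ℕ} (s : Set ι) :
    (fun k => ((s.indicator (1 : ι → Fin (n + 2)) k).val : R)) = s.indicator 1 := by
  ext k
  by_cases hk : k ∈ s <;> simp [hk]

/-- **Coefficient recovery for homogeneous quadratics (Step 2 of the NFA/FACT separation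
proof).** If `f(x) = ∑_{1 ≤ i ≤ j ≤ 4} c_{ij} x_i x_j` and
`g(x) = ∑_{1 ≤ i ≤ j ≤ 4} c'_{ij} x_i x_j`, then each coefficient difference is bounded by
`6⁴` times the `L²(Unif({0,1,2}⁴))` distance between `f` and `g`. -/
theorem quadratic_coefficient_recovery
    (f g : (Fin 4 → ℝ) → ℝ) (c c' : Fin 4 → Fin 4 → ℝ)
    (hf : ∀ x : Fin 4 → ℝ, f x = ∑ i : Fin 4, ∑ j ∈ Finset.Ici i, c i j * (x i * x j))
    (hg : ∀ x : Fin 4 → ℝ, g x = ∑ i : Fin 4, ∑ j ∈ Finset.Ici i, c' i j * (x i * x j)) :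
    ∀ i j : Fin 4, i ≤ j →
      |c i j - c' i j| ≤ 6 ^ 4 *
        Real.sqrt ((1 / 81 : ℝ) * ∑ x : Fin 4 → Fin 3,
          (f (fun i => ((x i : ℕ) : ℝ)) - g (fun i => ((x i : ℕ) : ℝ))) ^ 2) := by
  intro i j hij
  set rms := Real.sqrt ((1 / 81 : ℝ) * ∑ x : Fin 4 → Fin 3,
    (f (fun i => ((x i : ℕ) : ℝ)) - g (fun i => ((x i : ℕ) : ℝ))) ^ 2)
  have hpoint (s : Set (Fin 4)) : |upperQuadForm (c - c') (s.indicator 1)| ≤ 9 * rms := by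
    have hcard : (Fintype.card (Fin 4 → Fin 3) : ℝ) = 9 ^ 2 := by norm_num
    have := abs_le_sqrt_card_mul_sqrt_mean_sq
      (fun x : Fin 4 → Fin 3 => f (fun i => ((x i : ℕ) : ℝ)) - g (fun i => ((x i : ℕ) : ℝ)))
      (s.indicator 1)
    rw [hcard, Real.sqrt_sq (by norm_num), show (9 : ℝ) ^ 2 = 81 by norm_num,
      natCast_val_indicator_one, hf, hg] at this
    rwa [← upperQuadForm_sub]
  have hrms : 0 ≤ rms := Real.sqrt_nonneg _
  rcases hij.eq_or_lt with rfl | hlt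
  · calc |c i i - c' i i| = |upperQuadForm (c - c') (({i} : Set (Fin 4)).indicator 1)| := by
          rw [upperQuadForm_indicator_singleton, Pi.sub_apply, Pi.sub_apply]
      _ ≤ 6 ^ 4 * rms := (hpoint _).trans (by linarith)
  · calc |c i j - c' i j|
        ≤ |upperQuadForm (c - c') (({i, j} : Set (Fin 4)).indicator 1)|
          + |upperQuadForm (c - c') (({i} : Set (Fin 4)).indicator 1)|
          + |upperQuadForm (c - c') (({j} : Set (Fin 4)).indicator 1)| := by
          rw [show c i j - c' i j = (c - c') i j from rfl,
            eq_upperQuadForm_pair_sub_singletons (c - c') hlt]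
          exact (abs_sub _ _).trans (add_le_add_left (abs_sub _ _) _)
      _ ≤ 6 ^ 4 * rms := by linarith [hpoint {i, j}, hpoint {i}, hpoint {j}]
end

section
/- Let d ≤ m be positive integers and let Q ∈ ℝ^{d×d} be a symmetric matrix with eigenvalues λ₁, …, λ_d. Then there exist a ∈ ℝ^m and W ∈ ℝ^{m×d}, with a_i = 0 and the i-th row of W equal to 0 for all i > d, such that a^⊤ σ(W x) = x^⊤ Q x for all x ∈ ℝ^d, where σ(t) = t² is applied entrywise, and ‖a‖² + ‖W‖_F² = 2·Σ_{i=1}^d |λ_i|^{2/3}. -/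
/-
Diagonalize `Q = U diag(λ) Uᵀ` with `U` orthogonal. The network whose `i`-th neuron has input
weights `|λᵢ|^{1/3} uᵢ` (`uᵢ` the `i`-th eigenvector) and output weight `sgn(λᵢ) |λᵢ|^{1/3}`
computes `Σ λᵢ (uᵢ ⬝ x)² = xᵀ Q x`, and each neuron contributes `|λᵢ|^{2/3}` to both `‖a‖²` and
`‖W‖_F²`. Neurons `d, …, m - 1` are set to zero, which changes neither the output nor the cost.
-/

open Matrix Function

namespace Real

lemma rpow_one_third_pow_three {t : ℝ} (ht : 0 ≤ t) : (t ^ ((1 : ℝ) / 3)) ^ 3 = t := by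
  rw [← rpow_natCast, ← rpow_mul ht]; norm_num

lemma rpow_one_third_sq {t : ℝ} (ht : 0 ≤ t) : (t ^ ((1 : ℝ) / 3)) ^ 2 = t ^ ((2 : ℝ) / 3) := by
  rw [← rpow_natCast, ← rpow_mul ht]; norm_num

lemma sign_mul_abs_rpow_one_third_mul_sq (t : ℝ) :
    (SignType.sign t * |t| ^ ((1 : ℝ) / 3)) * (|t| ^ ((1 : ℝ) / 3)) ^ 2 = t := by
  rw [mul_assoc, ← pow_succ', rpow_one_third_pow_three (abs_nonneg t), sign_mul_abs]

lemma sq_sign_mul_abs_rpow_one_third (t : ℝ) :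
    (SignType.sign t * |t| ^ ((1 : ℝ) / 3)) ^ 2 = |t| ^ ((2 : ℝ) / 3) := by
  rcases eq_or_ne t 0 with rfl | ht
  · simp
  · rw [mul_pow, rpow_one_third_sq (abs_nonneg t)]
    rcases ht.lt_or_gt with h | h <;> simp [h]

end Real

variable {ι κ n : Type*} [Fintype ι] [Fintype κ] [Fintype n]

def quadNet (a : ι → ℝ) (W : Matrix ι n ℝ) (x : n → ℝ) : ℝ := ∑ i, a i * (W *ᵥ x) i ^ 2

def quadNetCost (a : ι → ℝ) (W : Matrix ι n ℝ) : ℝ := ∑ i, a i ^ 2 + ∑ i, ∑ j, W i j ^ 2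

lemma quadNet_eq_dotProduct_mulVec [DecidableEq ι] (a : ι → ℝ) (W : Matrix ι n ℝ)
    (x : n → ℝ) : quadNet a W x = x ⬝ᵥ (Wᵀ * diagonal a * W) *ᵥ x := by
  rw [← mulVec_mulVec, ← mulVec_mulVec, dotProduct_mulVec, vecMul_transpose, dotProduct, quadNet]
  simp only [mulVec_diagonal]
  exact Finset.sum_congr rfl fun i _ => by ring

lemma sum_sum_sq_eq_trace_mul_transpose (W : Matrix ι n ℝ) :
    ∑ i, ∑ j, W i j ^ 2 = trace (W * Wᵀ) := by
  simp [trace, mul_apply, sq]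

-- `fun i => W i` rather than `W`: `extend` must see the function type, not `Matrix ι n ℝ`.
lemma quadNet_extend (e : ι → κ) (he : Injective e) (a : ι → ℝ) (W : Matrix ι n ℝ)
    (x : n → ℝ) : quadNet (extend e a 0) (extend e (fun i => W i) 0) x = quadNet a W x := by
  refine (Fintype.sum_of_injective e he _ _ (fun k hk => ?_) fun i => ?_).symm
  · simp [extend_apply' _ _ _ hk]
  · simp [mulVec, he.extend_apply]

lemma quadNetCost_extend (e : ι → κ) (he : Injective e) (a : ι → ℝ) (W : Matrix ι n ℝ) :
    quadNetCost (extend e a 0) (extend e (fun i => W i) 0) = quadNetCost a W := by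
  unfold quadNetCost
  congr 1 <;> exact (Fintype.sum_of_injective e he _ _
    (fun k hk => by simp [extend_apply' _ _ _ hk]) fun i => by simp [he.extend_apply]).symm

variable [DecidableEq n]

section CubeRoot

variable (lam : n → ℝ)

lemma quadNet_cubeRoot (U : Matrix n n ℝ) (x : n → ℝ) :
    quadNet (fun i => SignType.sign (lam i) * |lam i| ^ ((1 : ℝ) / 3))
      (diagonal (fun i => |lam i| ^ ((1 : ℝ) / 3)) * Uᵀ) x
      = x ⬝ᵥ (U * diagonal lam * Uᵀ) *ᵥ x := by
  rw [quadNet_eq_dotProduct_mulVec, transpose_mul, transpose_transpose, diagonal_transpose,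
    Matrix.mul_assoc, Matrix.mul_assoc, ← Matrix.mul_assoc _ _ Uᵀ, ← Matrix.mul_assoc (diagonal _),
    diagonal_mul_diagonal, diagonal_mul_diagonal, ← Matrix.mul_assoc]
  congr 3
  exact congrArg (U * diagonal ·) <| funext fun i => by
    linear_combination Real.sign_mul_abs_rpow_one_third_mul_sq (lam i)

lemma quadNetCost_cubeRoot {U : Matrix n n ℝ} (hU : Uᵀ * U = 1) :
    quadNetCost (fun i => SignType.sign (lam i) * |lam i| ^ ((1 : ℝ) / 3))
      (diagonal (fun i => |lam i| ^ ((1 : ℝ) / 3)) * Uᵀ) = 2 * ∑ i, |lam i| ^ ((2 : ℝ) / 3) := by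
  have hWWt : (diagonal (fun i => |lam i| ^ ((1 : ℝ) / 3)) * Uᵀ) *
      (diagonal (fun i => |lam i| ^ ((1 : ℝ) / 3)) * Uᵀ)ᵀ
      = diagonal (fun i => |lam i| ^ ((2 : ℝ) / 3)) := by
    rw [transpose_mul, transpose_transpose, diagonal_transpose, Matrix.mul_assoc,
      ← Matrix.mul_assoc Uᵀ, hU, Matrix.one_mul, diagonal_mul_diagonal]
    simp_rw [← sq, Real.rpow_one_third_sq (abs_nonneg _)]
  rw [quadNetCost, sum_sum_sq_eq_trace_mul_transpose, hWWt, trace_diagonal, two_mul]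
  simp_rw [Real.sq_sign_mul_abs_rpow_one_third]

end CubeRoot

namespace Matrix.IsHermitian

variable {Q : Matrix n n ℝ} (hQ : Q.IsHermitian)

lemma eq_eigenvectorUnitary_mul_diagonal_mul_transpose :
    Q = (hQ.eigenvectorUnitary : Matrix n n ℝ) * diagonal hQ.eigenvalues *
      (hQ.eigenvectorUnitary : Matrix n n ℝ)ᵀ := by
  conv_lhs => rw [hQ.spectral_theorem]
  simp [star_eq_conjTranspose]

lemma eigenvectorUnitary_transpose_mul_self :
    (hQ.eigenvectorUnitary : Matrix n n ℝ)ᵀ * hQ.eigenvectorUnitary = 1 := by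
  simpa [star_eq_conjTranspose] using hQ.eigenvectorUnitary.2.1

theorem exists_quadNet_eq_dotProduct_mulVec :
    ∃ (a : n → ℝ) (W : Matrix n n ℝ), (∀ x, quadNet a W x = x ⬝ᵥ Q *ᵥ x) ∧
      quadNetCost a W = 2 * ∑ i, |hQ.eigenvalues i| ^ ((2 : ℝ) / 3) := by
  refine ⟨_, _, fun x => ?_, quadNetCost_cubeRoot _ hQ.eigenvectorUnitary_transpose_mul_self⟩
  rw [quadNet_cubeRoot, ← hQ.eq_eigenvectorUnitary_mul_diagonal_mul_transpose]

end Matrix.IsHermitian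

theorem min_norm_quadratic_network_achievability_general
    (d m : ℕ) (hdm : d ≤ m)
    (Q : Matrix (Fin d) (Fin d) ℝ) (hQ : Q.IsHermitian) :
    ∃ (a : Fin m → ℝ) (W : Matrix (Fin m) (Fin d) ℝ),
      (∀ i : Fin m, d ≤ (i : ℕ) → a i = 0 ∧ ∀ j, W i j = 0) ∧
      (∀ x : Fin d → ℝ, ∑ i, a i * (W.mulVec x i) ^ 2 = x ⬝ᵥ Q.mulVec x) ∧
      (∑ i, a i ^ 2) + (∑ i, ∑ j, W i j ^ 2)
        = 2 * ∑ i : Fin d, |hQ.eigenvalues i| ^ ((2 : ℝ) / 3) := by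
  obtain ⟨a, W, hout, hcost⟩ := hQ.exists_quadNet_eq_dotProduct_mulVec
  have he : Injective (Fin.castLE hdm) := Fin.castLE_injective hdm
  refine ⟨extend (Fin.castLE hdm) a 0, extend (Fin.castLE hdm) (fun i => W i) 0,
    fun i hi => ?_, fun x => (quadNet_extend _ he a W x).trans (hout x),
    (quadNetCost_extend _ he a W).trans hcost⟩
  have hi : i ∉ Set.range (Fin.castLE hdm) := by
    rintro ⟨k, rfl⟩
    exact hi.not_gt k.isLt
  simp [extend_apply' _ _ _ hi]

/-- **Achievability direction of the minimum-norm representation lemma for two-layer quadratic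
networks.** For a symmetric `Q ∈ ℝ^{d×d}` with eigenvalues `λ₁, …, λ_d` and any width `m ≥ d`,
there is a network `aᵀ σ(W x)` computing `x ↦ xᵀ Q x` using only the first `d` neurons, with
total squared norm `‖a‖² + ‖W‖_F² = 2 ∑ i |λ_i|^{2/3}`. -/
theorem min_norm_quadratic_network_achievability
    (d m : ℕ) (hd : 0 < d) (hdm : d ≤ m)
    (Q : Matrix (Fin d) (Fin d) ℝ) (hQ : Q.IsHermitian) :
    ∃ (a : Fin m → ℝ) (W : Matrix (Fin m) (Fin d) ℝ),
      (∀ i : Fin m, d ≤ (i : ℕ) → a i = 0 ∧ ∀ j, W i j = 0) ∧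
      (∀ x : Fin d → ℝ, ∑ i, a i * (W.mulVec x i) ^ 2 = x ⬝ᵥ Q.mulVec x) ∧
      (∑ i, a i ^ 2) + (∑ i, ∑ j, W i j ^ 2)
        = 2 * ∑ i : Fin d, |hQ.eigenvalues i| ^ ((2 : ℝ) / 3) :=
  min_norm_quadratic_network_achievability_general d m hdm Q hQ
end

section
/- Let n, c, d be positive integers and λ > 0. Let x₁, …, x_n ∈ ℝ^d, y₁, …, y_n ∈ ℝ^c, and let K : ℝ^d × ℝ^d → ℝ be such that x ↦ K(x, z) is differentiable for every z ∈ ℝ^d. Let G ∈ ℝ^{n×n} be the Gram matrix G_{ij} = K(x_i, x_j), assume G is symmetric positive semidefinite, let Y ∈ ℝ^{n×c} have rows y_i, and set α := (G + nλ·I)^{−1} Y with rows α_i ∈ ℝ^c. Define the kernel predictor f̂(x) = Σ_{j=1}^n K(x, x_j) α_j and the loss ℓ(ŷ, y) = (1/2)‖ŷ − y‖². Then −(1/(nλ))·Σ_{i=1}^n (∇_x [ℓ(f̂(x), y_i)]|_{x = x_i}) x_i^⊤ = Σ_{i,j=1}^n (∇_x [K(x, x_j)]|_{x = x_i}) α_j^⊤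 α_i · x_i^⊤, as an identity of d×d matrices, where ∇_x denotes the gradient with respect to x, α_j^⊤ α_i ∈ ℝ is the Euclidean inner product of α_j and α_i, and u x^⊤ denotes the outer product of u ∈ ℝ^d with x ∈ ℝ^d. -/
/-!
Since `(G + nλ I) α = Y`, the residuals of the kernel ridge regression fit are
`f̂(x_i) - y_i = (G α - Y)_i = -nλ α_i`. By the chain rule the gradient of the squared loss at `x_i`
is `∑_j ⟨f̂(x_i) - y_i, α_j⟩ ∇_x K(x_i, x_j)`, so it equals `-nλ ∑_j ⟨α_i, α_j⟩ ∇_x K(x_i, x_j)`,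
and the factor `-nλ` cancels the prefactor `-1/(nλ)` of the FACT matrix.
-/

open Matrix

theorem grad_apply {k : ℕ} (f : EuclideanSpace ℝ (Fin k) → ℝ) (x : Fin k → ℝ) (p : Fin k) :
    grad f x p
      = fderiv ℝ f ((WithLp.equiv 2 (Fin k → ℝ)).symm x) (EuclideanSpace.single p 1) := by
  rw [← inner_gradient_left, EuclideanSpace.inner_single_right]
  simp [grad]

theorem Matrix.sum_vecMulVec {ι m n α : Type*} [NonUnitalNonAssocSemiring α] (s : Finset ι)
    (w : ι → m → α) (v : n → α) :
    vecMulVec (∑ i ∈ s, w i) v = ∑ i ∈ s, vecMulVec (w i) v := by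
  ext a b
  simp [vecMulVec_apply, Finset.sum_apply, Finset.sum_mul, Matrix.sum_apply]

theorem Matrix.mul_inv_add_smul_one_mul_sub {ι κ R : Type*} [Fintype ι] [DecidableEq ι]
    [CommRing R] {G : Matrix ι ι R} {μ : R} (h : IsUnit (G + μ • 1)) (Y : Matrix ι κ R) :
    G * ((G + μ • 1)⁻¹ * Y) - Y = -(μ • ((G + μ • 1)⁻¹ * Y)) := by
  set A := (G + μ • 1)⁻¹ * Y
  have hY : G * A + μ • A = Y := by
    have := (G + μ • 1).mul_nonsing_inv_cancel_left Y ((G + μ • 1).isUnit_iff_isUnit_det.mp h)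
    rwa [Matrix.add_mul, Matrix.smul_mul, Matrix.one_mul] at this
  rw [← hY]
  abel

theorem Matrix.PosSemidef.isUnit_add_smul_one {ι : Type*} [Fintype ι] [DecidableEq ι]
    {G : Matrix ι ι ℝ} (hG : G.PosSemidef) {μ : ℝ} (hμ : 0 < μ) : IsUnit (G + μ • 1) :=
  (PosDef.posSemidef_add hG (PosDef.one.smul hμ)).isUnit

theorem HasFDerivAt.half_sum_sq_sub {E κ : Type*} [NormedAddCommGroup E] [NormedSpace ℝ E]
    [Fintype κ] {g : κ → E → ℝ} {g' : κ → E →L[ℝ] ℝ} {x : E}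
    (hg : ∀ l, HasFDerivAt (g l) (g' l) x) (y : κ → ℝ) :
    HasFDerivAt (fun x => (1 / 2 : ℝ) * ∑ l, (g l x - y l) ^ 2)
      (∑ l, (g l x - y l) • g' l) x := by
  have := (HasFDerivAt.fun_sum (u := Finset.univ)
    fun l _ => ((hg l).sub_const (y l)).pow 2).const_mul (1 / 2 : ℝ)
  refine this.congr_fderiv ?_
  rw [Finset.smul_sum]
  refine Finset.sum_congr rfl fun l _ => ?_
  rw [smul_smul, nsmul_eq_mul]
  congr 1
  ring

theorem hasFDerivAt_sum_mul {E ι : Type*} [NormedAddCommGroup E] [NormedSpace ℝ E]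
    [Fintype ι] {K : ι → E → ℝ} {x : E} (hK : ∀ j, DifferentiableAt ℝ (K j) x) (a : ι → ℝ) :
    HasFDerivAt (fun x => ∑ j, K j x * a j) (∑ j, a j • fderiv ℝ (K j) x) x :=
  HasFDerivAt.fun_sum fun j _ => (hK j).hasFDerivAt.mul_const (a j)

theorem grad_half_sum_sq_sub_sum_mul {k : ℕ} {ι κ : Type*} [Fintype ι] [Fintype κ]
    {K : ι → EuclideanSpace ℝ (Fin k) → ℝ} {x : Fin k → ℝ}
    (hK : ∀ j, DifferentiableAt ℝ (K j) ((WithLp.equiv 2 (Fin k → ℝ)).symm x))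
    (α : ι → κ → ℝ) (y : κ → ℝ) :
    grad (fun x => (1 / 2 : ℝ) * ∑ l, (∑ j, K j x * α j l - y l) ^ 2) x
      = ∑ j, (∑ l, (∑ j', K j' ((WithLp.equiv 2 (Fin k → ℝ)).symm x) * α j' l - y l) * α j l)
          • grad (K j) x := by
  ext p
  rw [grad_apply, (HasFDerivAt.half_sum_sq_sub (fun l => hasFDerivAt_sum_mul hK (α · l)) y).fderiv]
  simp only [Finset.sum_apply, Pi.smul_apply, grad_apply, smul_eq_mul, _root_.sum_apply,
    _root_.smul_apply, Finset.mul_sum, Finset.sum_mul]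
  rw [Finset.sum_comm]
  simp only [mul_assoc]

theorem kernel_fact_identity_general
    (n c d : ℕ) (hn : 0 < n) (lam : ℝ) (hlam : 0 < lam)
    (xs : Fin n → Fin d → ℝ)
    (K : EuclideanSpace ℝ (Fin d) → EuclideanSpace ℝ (Fin d) → ℝ)
    (hK : ∀ z, Differentiable ℝ fun x => K x z)
    (G : Matrix (Fin n) (Fin n) ℝ)
    (hG : G = Matrix.of fun i j =>
      K ((WithLp.equiv 2 (Fin d → ℝ)).symm (xs i)) ((WithLp.equiv 2 (Fin d → ℝ)).symm (xs j)))
    (hGpsd : G.PosSemidef)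
    (Y : Matrix (Fin n) (Fin c) ℝ)
    (α : Matrix (Fin n) (Fin c) ℝ)
    (hα : α = (G + ((n : ℝ) * lam) • (1 : Matrix (Fin n) (Fin n) ℝ))⁻¹ * Y)
    (fhat : EuclideanSpace ℝ (Fin d) → Fin c → ℝ)
    (hfhat : ∀ x kk, fhat x kk
      = ∑ j, K x ((WithLp.equiv 2 (Fin d → ℝ)).symm (xs j)) * α j kk) :
    (-(1 / ((n : ℝ) * lam))) •
        ∑ i, Matrix.vecMulVec
          (grad (fun x => (1 / 2 : ℝ) * ∑ kk, (fhat x kk - Y i kk) ^ 2) (xs i)) (xs i)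
      = ∑ i, ∑ j, (∑ kk, α j kk * α i kk) •
          Matrix.vecMulVec
            (grad (fun x => K x ((WithLp.equiv 2 (Fin d → ℝ)).symm (xs j))) (xs i))
            (xs i) := by
  set z : Fin n → EuclideanSpace ℝ (Fin d) := fun i => (WithLp.equiv 2 (Fin d → ℝ)).symm (xs i)
  have hμ : 0 < (n : ℝ) * lam := by positivity
  have hresidual : ∀ i l, ∑ j, K (z i) (z j) * α j l - Y i l = -((n * lam) * α i l) := by
    intro i l
    have h := congrFun (congrFun
      (Matrix.mul_inv_add_smul_one_mul_sub (hGpsd.isUnit_add_smul_one hμ) Y) i) l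
    rw [← hα] at h
    simpa [Matrix.mul_apply, hG, z] using h
  have hgrad : ∀ i, grad (fun x => (1 / 2 : ℝ) * ∑ l, (fhat x l - Y i l) ^ 2) (xs i)
      = ∑ j, (-(n * lam) * ∑ l, α j l * α i l) • grad (fun x => K x (z j)) (xs i) := by
    intro i
    simp only [hfhat]
    rw [grad_half_sum_sq_sub_sum_mul (fun j => hK (z j) _) α (Y i)]
    simp only [show (WithLp.equiv 2 (Fin d → ℝ)).symm (xs i) = z i from rfl, hresidual]
    congr! 2 with j
    rw [Finset.mul_sum]
    exact Finset.sum_congr rfl fun l _ => by ring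
  simp only [hgrad, Matrix.sum_vecMulVec, Matrix.smul_vecMulVec, Finset.smul_sum, smul_smul]
  congr! 3
  field_simp

/-- **Simplified form of the FACT matrix for kernel ridge regression.** With
`α = (G + nλ I)⁻¹ Y`, predictor `f̂(x) = ∑ j K(x, x_j) α_j` and squared loss
`ℓ(ŷ, y) = ½‖ŷ - y‖²`, the FACT matrix `-(1/(nλ)) ∑ i (∇_x ℓ(f̂(x), y_i)|_{x_i}) x_iᵀ`
equals `∑_{i,j} (∇_x K(x,x_j)|_{x_i}) α_jᵀ α_i x_iᵀ`. -/
theorem kernel_fact_identity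
    (n c d : ℕ) (hn : 0 < n) (hc : 0 < c) (hd : 0 < d) (lam : ℝ) (hlam : 0 < lam)
    (xs : Fin n → Fin d → ℝ)
    (K : EuclideanSpace ℝ (Fin d) → EuclideanSpace ℝ (Fin d) → ℝ)
    (hK : ∀ z, Differentiable ℝ fun x => K x z)
    (G : Matrix (Fin n) (Fin n) ℝ)
    (hG : G = Matrix.of fun i j =>
      K ((WithLp.equiv 2 (Fin d → ℝ)).symm (xs i)) ((WithLp.equiv 2 (Fin d → ℝ)).symm (xs j)))
    (hGpsd : G.PosSemidef)
    (Y : Matrix (Fin n) (Fin c) ℝ)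
    (α : Matrix (Fin n) (Fin c) ℝ)
    (hα : α = (G + ((n : ℝ) * lam) • (1 : Matrix (Fin n) (Fin n) ℝ))⁻¹ * Y)
    (fhat : EuclideanSpace ℝ (Fin d) → Fin c → ℝ)
    (hfhat : ∀ x kk, fhat x kk
      = ∑ j, K x ((WithLp.equiv 2 (Fin d → ℝ)).symm (xs j)) * α j kk) :
    (-(1 / ((n : ℝ) * lam))) •
        ∑ i, Matrix.vecMulVec
          (grad (fun x => (1 / 2 : ℝ) * ∑ kk, (fhat x kk - Y i kk) ^ 2) (xs i)) (xs i)
      = ∑ i, ∑ j, (∑ kk, α j kk * α i kk) •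
          Matrix.vecMulVec
            (grad (fun x => K x ((WithLp.equiv 2 (Fin d → ℝ)).symm (xs j))) (xs i))
            (xs i) :=
  kernel_fact_identity_general n c d hn lam hlam xs K hK G hG hGpsd Y α hα fhat hfhat
end

section
/- Let n, c, d be positive integers, let k : ℝ → ℝ be differentiable, let M ∈ ℝ^{d×d} be symmetric, and let x₁, …, x_n ∈ ℝ^d and α₁, …, α_n ∈ ℝ^c. Define the predictor f̂(x) = Σ_{j=1}^n k(x^⊤ M x_j) α_j and its input-gradient matrix ∇f̂(x) := Σ_{j=1}^n k'(x^⊤ M x_j) (M x_j) α_j^⊤ ∈ ℝ^{d×c}. Then the average gradient outer product AGOP := (1/n)·Σ_{l=1}^n (∇f̂(x_l))(∇f̂(x_l))^⊤ satisfies AGOP = Σ_{i,j=1}^n τ(x_i, M, x_j) · (M x_i) α_i^⊤ α_j (x_j^⊤ M^⊤), where τ(x_i, M, x_j) := (1/n)·Σ_{l=1}^n k'(x_l^⊤ M x_i) k'(x_l^⊤ M x_j), and α_i^⊤ α_j ∈ ℝ is the Euclidean inner product. -/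
open Matrix

private lemma sum4_comm {a b c e : ℕ} (f : Fin a → Fin b → Fin c → Fin e → ℝ) :
    ∑ l, ∑ kk, ∑ j, ∑ i, f l kk j i = ∑ i, ∑ j, ∑ kk, ∑ l, f l kk j i := by
  rw [Finset.sum_comm]
  simp_rw [Finset.sum_comm (γ := Fin e), Finset.sum_comm (γ := Fin c)]

/-- **AGOP of an inner-product-kernel predictor.** For the predictor
`f̂(x) = ∑ j k(xᵀ M x_j) α_j` with input-gradient matrix
`∇f̂(x) = ∑ j k'(xᵀ M x_j) (M x_j) α_jᵀ`, the average gradient outer product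
`AGOP = (1/n) ∑ l (∇f̂(x_l)) (∇f̂(x_l))ᵀ` equals
`∑_{i,j} τ(x_i, M, x_j) (M x_i) α_iᵀ α_j (x_jᵀ Mᵀ)` with
`τ(x_i, M, x_j) = (1/n) ∑ l k'(x_lᵀ M x_i) k'(x_lᵀ M x_j)`. -/
theorem agop_inner_product_kernel
    (n c d : ℕ) (hn : 0 < n) (hc : 0 < c) (hd : 0 < d)
    (k : ℝ → ℝ) (hk : Differentiable ℝ k)
    (M : Matrix (Fin d) (Fin d) ℝ) (hM : M.IsSymm)
    (xs : Fin n → Fin d → ℝ) (α : Fin n → Fin c → ℝ)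
    (Df : (Fin d → ℝ) → Matrix (Fin d) (Fin c) ℝ)
    (hDf : ∀ x, Df x = ∑ j, deriv k (x ⬝ᵥ M.mulVec (xs j)) •
      Matrix.vecMulVec (M.mulVec (xs j)) (α j))
    (AGOP : Matrix (Fin d) (Fin d) ℝ)
    (hAGOP : AGOP = ((1 : ℝ) / n) • ∑ l, Df (xs l) * (Df (xs l))ᵀ) :
    AGOP = ∑ i, ∑ j,
      (((1 : ℝ) / n) * ∑ l, deriv k (xs l ⬝ᵥ M.mulVec (xs i))
          * deriv k (xs l ⬝ᵥ M.mulVec (xs j))) •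
        (∑ kk, α i kk * α j kk) •
          Matrix.vecMulVec (M.mulVec (xs i)) (M.mulVec (xs j)) := by
  subst hAGOP
  ext a b
  simp only [hDf, Matrix.smul_apply, Matrix.sum_apply, Matrix.mul_apply,
    Matrix.transpose_apply, Matrix.vecMulVec_apply, smul_eq_mul,
    Finset.sum_mul, Finset.mul_sum]
  rw [sum4_comm]
  refine Finset.sum_congr rfl fun i _ => ?_
  refine Finset.sum_congr rfl fun j _ => ?_
  refine Finset.sum_congr rfl fun kk _ => ?_
  refine Finset.sum_congr rfl fun l _ => ?_
  ring
end
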